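/- Suppose S(A) = {a_n} and S(B) are independent Stanley sequences with scaling factors α(A) and α(B), and k ≥ κ(A). Let A* = {a_0, a_1, ..., a_{2^k − 1}} and A ⊗_k B = {a_{2^k}·b + a : a ∈ A*, b ∈ B}. Then the scaling factor of the independent Stanley sequence S(A ⊗_k B) equals the product α(A)·α(B). -/

import Mathlib

/-!
Write `ρ = a (2 ^ k)` and `A* = {a i | i < 2 ^ k} ⊆ [0, ρ)`. The sequence
`n ↦ ρ * b (n / 2 ^ k) + a (n % 2 ^ k)` enumerates `ρ • S(B) + A*` increasingly. It is 3-free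
because `S(B)` and `A* ∪ (ρ + A*) ⊆ S(A)` are, and every larger integer `ρ * s + r` outside it is
covered: combine a cover of the digit `s` in `S(B)` with a cover of `r` in `A*`, or with a cover of
`ρ + r` in `A*` after borrowing one from `s`. That `r ∉ A*` has one of these two covers follows
from the greedy cover of `a (2 ^ K) + r` in `S(A)` for large `K`, pulled down one level at a time
using `a (2 ^ (K + 1)) = 3 * a (2 ^ K)`. Hence this sequence is `S(A ⊗ₖ B)`; it is independent
from `k + κ(B)` on with `λ = ρ * λ(B) + λ(A)`, and its term at `2 ^ (k + j)` is
`ρ * b (2 ^ j)`, so its scaling factor is `(ρ / 3 ^ k) * α(B) = α(A) * α(B)`.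
-/

/-- A set of integers is 3-free if it contains no 3-term arithmetic progression. -/
def ThreeFreeSet (S : Set ℤ) : Prop :=
  ∀ x ∈ S, ∀ y ∈ S, ∀ z ∈ S, x < y → y < z → x + z ≠ 2 * y

/-- `a` is the Stanley sequence generated greedily from the finite 3-free set `A`
of nonnegative integers containing 0: `a` first enumerates `A` in increasing order,
and for `n ≥ |A|`, `a n` is the least integer exceeding `a (n-1)` keeping the
set of terms so far 3-free. -/
def IsStanleySeq (A : Finset ℤ) (a : ℕ → ℤ) : Prop :=
  (0 : ℤ) ∈ A ∧ (∀ x ∈ A, 0 ≤ x) ∧ ThreeFreeSet ↑A ∧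
  StrictMono a ∧ (∀ i < A.card, a i ∈ A) ∧
  ∀ n, A.card ≤ n →
    IsLeast {m : ℤ | a (n - 1) < m ∧ ThreeFreeSet (a '' Set.Iio n ∪ {m})} (a n)

/-- The two defining conditions of an independent Stanley sequence,
for a given λ and κ. -/
def IndepParams (a : ℕ → ℤ) (lam : ℤ) (κ : ℕ) : Prop :=
  ∀ k, κ ≤ k →
    (∀ i < 2 ^ k, a (2 ^ k + i) = a (2 ^ k) + a i) ∧
    a (2 ^ k) = 2 * a (2 ^ k - 1) + 1 - lam

/-- A Stanley sequence is independent if `IndepParams` holds for some λ and κ. -/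
def Independent (a : ℕ → ℤ) : Prop := ∃ lam κ, IndepParams a lam κ

/-- κ(A): the minimal κ witnessing independence. -/
noncomputable def kappa (a : ℕ → ℤ) : ℕ := sInf {κ | ∃ lam, IndepParams a lam κ}

/-- λ(A), recovered from the defining equation at k = κ(A). -/
noncomputable def lambdaA (a : ℕ → ℤ) : ℤ :=
  2 * a (2 ^ kappa a - 1) + 1 - a (2 ^ kappa a)

/-- The repeat factor ρ(A) = a_{2^{κ(A)}}. -/
noncomputable def rho (a : ℕ → ℤ) : ℤ := a (2 ^ kappa a)

/-- The scaling factor α(A), satisfying a_{2^k} = α·3^k for all k ≥ κ(A). -/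
noncomputable def scalingFactor (a : ℕ → ℤ) : ℚ :=
  (a (2 ^ kappa a) : ℚ) / 3 ^ kappa a

/-- An integer `x` is covered by a set `S` if there are `y < z < x` in `S`
with `y, z, x` in arithmetic progression. -/
def Covers (S : Set ℤ) (x : ℤ) : Prop :=
  ∃ y z, y ∈ S ∧ z ∈ S ∧ y < z ∧ z < x ∧ 2 * z = y + x

/-- An integer `x` is jointly covered by `S` and `T` if there are `y < z < x`
with `y ∈ S`, `z ∈ T`, and `y, z, x` in arithmetic progression. -/
def JointlyCovers (S T : Set ℤ) (x : ℤ) : Prop :=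
  ∃ y z, y ∈ S ∧ z ∈ T ∧ y < z ∧ z < x ∧ 2 * z = y + x

/-- O(A): nonnegative integers neither in the Stanley sequence nor covered by it. -/
def OSet (a : ℕ → ℤ) : Set ℤ :=
  {x | 0 ≤ x ∧ x ∉ Set.range a ∧ ¬ Covers (Set.range a) x}

/-- ω(A): the maximum element of O(A). -/
noncomputable def omegaA (a : ℕ → ℤ) : ℤ := sSup (OSet a)

/-- The translate `S + t` of a set of integers. -/
def shift (S : Set ℤ) (t : ℤ) : Set ℤ := (· + t) '' S

/-- A triadic number: a rational whose denominator in lowest terms is a power of 3. -/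
def IsTriadic (q : ℚ) : Prop := ∃ j : ℕ, q.den = 3 ^ j
section ThreeFree

theorem ThreeFreeSet.mono {S T : Set ℤ} (hT : ThreeFreeSet T) (hST : S ⊆ T) :
    ThreeFreeSet S :=
  fun x hx y hy z hz => hT x (hST hx) y (hST hy) z (hST hz)

theorem Covers.mono {S T : Set ℤ} {x : ℤ} (h : Covers S x) (hST : ∀ y ∈ S, y < x → y ∈ T) :
    Covers T x := by
  obtain ⟨y, z, hy, hz, hyz, hzx, hAP⟩ := h
  exact ⟨y, z, hST y hy (hyz.trans hzx), hST z hz hzx, hyz, hzx, hAP⟩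

theorem ThreeFreeSet.covers_of_not_threeFree_union {S : Set ℤ} {x : ℤ} (hS : ThreeFreeSet S)
    (hlt : ∀ y ∈ S, y < x) (hx : ¬ ThreeFreeSet (S ∪ {x})) : Covers S x := by
  have mem_of_lt : ∀ y ∈ S ∪ {x}, y < x → y ∈ S := by
    rintro y (hy | rfl) hyx
    exacts [hy, absurd hyx (lt_irrefl y)]
  simp only [ThreeFreeSet, not_forall, not_not] at hx
  obtain ⟨y, hy, z, hz, w, hw, hyz, hzw, hAP⟩ := hx
  obtain hwS | rfl := hw
  · have hwx := hlt w hwS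
    exact absurd hAP (hS y (mem_of_lt y hy (by omega)) z (mem_of_lt z hz (by omega)) w hwS hyz hzw)
  · exact ⟨y, z, mem_of_lt y hy (by omega), mem_of_lt z hz hzw, hyz, hzw, by omega⟩

end ThreeFree

section Stanley

variable {A : Finset ℤ} {a : ℕ → ℤ}

theorem IsStanleySeq.strictMono (ha : IsStanleySeq A a) : StrictMono a := ha.2.2.2.1

theorem IsStanleySeq.mem_seed (ha : IsStanleySeq A a) {i : ℕ} (hi : i < A.card) : a i ∈ A :=
  ha.2.2.2.2.1 i hi

theorem IsStanleySeq.isLeast (ha : IsStanleySeq A a) {n : ℕ} (hn : A.card ≤ n) :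
    IsLeast {m : ℤ | a (n - 1) < m ∧ ThreeFreeSet (a '' Set.Iio n ∪ {m})} (a n) :=
  ha.2.2.2.2.2 n hn

theorem IsStanleySeq.image_range_card (ha : IsStanleySeq A a) :
    (Finset.range A.card).image a = A := by
  refine Finset.eq_of_subset_of_card_le (fun x hx => ?_) ?_
  · obtain ⟨i, hi, rfl⟩ := Finset.mem_image.1 hx
    exact ha.mem_seed (Finset.mem_range.1 hi)
  · rw [Finset.card_image_of_injective _ ha.strictMono.injective, Finset.card_range]

theorem IsStanleySeq.card_pos (ha : IsStanleySeq A a) : 0 < A.card :=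
  Finset.card_pos.2 ⟨0, ha.1⟩

theorem IsStanleySeq.apply_zero (ha : IsStanleySeq A a) : a 0 = 0 := by
  obtain ⟨i, -, hi⟩ := Finset.mem_image.1 (ha.image_range_card ▸ ha.1)
  have h0 : 0 ≤ a 0 := ha.2.1 _ (ha.mem_seed ha.card_pos)
  have := ha.strictMono.monotone (Nat.zero_le i)
  omega

theorem IsStanleySeq.nonneg (ha : IsStanleySeq A a) (n : ℕ) : 0 ≤ a n :=
  ha.apply_zero ▸ ha.strictMono.monotone (Nat.zero_le n)

theorem IsStanleySeq.threeFree_image_Iio (ha : IsStanleySeq A a) (n : ℕ) :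
    ThreeFreeSet (a '' Set.Iio n) := by
  induction n with
  | zero => simp [ThreeFreeSet]
  | succ n ih =>
    rcases lt_or_ge n A.card with hn | hn
    · refine ha.2.2.1.mono ?_
      rintro _ ⟨i, hi, rfl⟩
      exact ha.mem_seed (lt_of_lt_of_le hi hn)
    · refine (ha.isLeast hn).1.2.mono ?_
      rintro _ ⟨i, hi, rfl⟩
      obtain hi | rfl := Nat.lt_succ_iff_lt_or_eq.1 hi
      exacts [Or.inl ⟨i, hi, rfl⟩, Or.inr rfl]

theorem IsStanleySeq.threeFree_range (ha : IsStanleySeq A a) : ThreeFreeSet (Set.range a) := by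
  rintro _ ⟨i, rfl⟩ _ ⟨j, rfl⟩ _ ⟨l, rfl⟩ hij hjl
  have hij' := ha.strictMono.lt_iff_lt.1 hij
  have hjl' := ha.strictMono.lt_iff_lt.1 hjl
  exact ha.threeFree_image_Iio (l + 1) _ ⟨i, Set.mem_Iio.2 (by omega), rfl⟩
    _ ⟨j, Set.mem_Iio.2 (by omega), rfl⟩ _ ⟨l, Set.mem_Iio.2 (by omega), rfl⟩ hij hjl

theorem IsStanleySeq.covers (ha : IsStanleySeq A a) {x : ℤ} (hx : x ∉ Set.range a)
    (hxA : a (A.card - 1) < x) : Covers (Set.range a) x := by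
  classical
  have hex : ∃ n, x < a n := by
    have := not_bddAbove_iff.1 ha.strictMono.not_bddAbove_range_of_isSuccArchimedean x
    simpa using this
  set n := Nat.find hex
  have hxn : x < a n := Nat.find_spec hex
  have hbelow : ∀ i < n, a i < x := fun i hi =>
    (not_lt.1 (Nat.find_min hex hi)).lt_of_ne fun h => hx ⟨i, h⟩
  have hAn : A.card ≤ n := by
    by_contra! h
    exact absurd (ha.strictMono.monotone (by omega : n ≤ A.card - 1)) (by omega)
  have hn : n - 1 < n := by have := ha.card_pos; omega
  have hfree : ¬ ThreeFreeSet (a '' Set.Iio n ∪ {x}) := fun hfree =>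
    (ha.isLeast hAn).2 ⟨hbelow _ hn, hfree⟩ |>.not_gt hxn
  refine (ha.threeFree_image_Iio n).covers_of_not_threeFree_union ?_ hfree |>.mono ?_
  · rintro _ ⟨i, hi, rfl⟩; exact hbelow i hi
  · rintro _ ⟨i, -, rfl⟩ -; exact ⟨i, rfl⟩

theorem StrictMono.isLeast_greedy {c : ℕ → ℤ} {N n : ℕ} (hc : StrictMono c)
    (hfree : ThreeFreeSet (Set.range c))
    (hcov : ∀ x, c (N - 1) < x → x ∉ Set.range c → Covers (Set.range c) x)
    (hN : N ≤ n) (hn : 0 < n) :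
    IsLeast {m : ℤ | c (n - 1) < m ∧ ThreeFreeSet (c '' Set.Iio n ∪ {m})} (c n) := by
  refine ⟨⟨hc (by omega), hfree.mono ?_⟩, fun m ⟨hm, hmfree⟩ => ?_⟩
  · rintro _ (⟨i, -, rfl⟩ | rfl)
    exacts [⟨i, rfl⟩, ⟨n, rfl⟩]
  by_contra! hmn
  have hmc : m ∉ Set.range c := by
    rintro ⟨j, rfl⟩
    have := hc.lt_iff_lt.1 hm
    have := hc.lt_iff_lt.1 hmn
    omega
  obtain ⟨_, _, ⟨i, rfl⟩, ⟨j, rfl⟩, hij, hjm, hAP⟩ :=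
    hcov m ((hc.monotone (by omega)).trans_lt hm) hmc
  exact hmfree _ (Or.inl ⟨i, hc.lt_iff_lt.1 ((hij.trans hjm).trans hmn), rfl⟩)
    _ (Or.inl ⟨j, hc.lt_iff_lt.1 (hjm.trans hmn), rfl⟩) _ (Or.inr rfl) hij hjm (by omega)

theorem IsStanleySeq.eq_of_greedy (ha : IsStanleySeq A a) {c : ℕ → ℤ} {N : ℕ}
    (hc : StrictMono c) (hseed : (Finset.range N).image c = A)
    (hfree : ThreeFreeSet (Set.range c))
    (hcov : ∀ x, c (N - 1) < x → x ∉ Set.range c → Covers (Set.range c) x) : a = c := by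
  have hN : A.card = N := by
    rw [← hseed, Finset.card_image_of_injective _ hc.injective, Finset.card_range]
  subst hN
  have hseed_eq : ∀ i < A.card, a i = c i := by
    have hrange :
        Set.range (fun i : Fin A.card => a i) = Set.range (fun i : Fin A.card => c i) := by
      ext x
      have ha' := Finset.ext_iff.1 ha.image_range_card x
      have hc' := Finset.ext_iff.1 hseed x
      simp only [Finset.mem_image, Finset.mem_range] at ha' hc'
      simp only [Set.mem_range, Fin.exists_iff, exists_prop, ha', hc']
    have := (StrictMono.range_inj (f := fun i : Fin A.card => a i) (g := fun i => c i)
      (fun _ _ h => ha.strictMono h) (fun _ _ h => hc h)).1 hrange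
    exact fun i hi => congrFun this ⟨i, hi⟩
  funext n
  induction n using Nat.strong_induction_on with
  | _ n ih =>
    rcases lt_or_ge n A.card with hn | hn
    · exact hseed_eq n hn
    · have hn0 := ha.card_pos
      have hL := ha.isLeast hn
      rw [Set.image_congr (s := Set.Iio n) fun j hj => ih j hj, ih (n - 1) (by omega)] at hL
      exact hL.unique (hc.isLeast_greedy hfree hcov hn (by omega))

end Stanley

theorem StrictMono.mem_image_Iio {a : ℕ → ℤ} (hmono : StrictMono a) {x : ℤ} {N : ℕ}
    (hx : x ∈ Set.range a) (hxN : x < a N) : x ∈ a '' Set.Iio N := by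
  obtain ⟨n, rfl⟩ := hx
  exact ⟨n, hmono.lt_iff_lt.1 hxN, rfl⟩

theorem StrictMono.image_Iio_subset_Ico {a : ℕ → ℤ} (hmono : StrictMono a)
    (hnonneg : ∀ n, 0 ≤ a n) (N : ℕ) : a '' Set.Iio N ⊆ Set.Ico 0 (a N) := by
  rintro _ ⟨i, hi, rfl⟩
  exact ⟨hnonneg i, hmono hi⟩

namespace IndepParams

variable {a : ℕ → ℤ} {lam : ℤ} {κ k K : ℕ}

theorem apply_two_pow_add (hP : IndepParams a lam κ) (hK : κ ≤ K) {i : ℕ} (hi : i < 2 ^ K) :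
    a (2 ^ K + i) = a (2 ^ K) + a i :=
  (hP K hK).1 i hi

theorem apply_two_pow_succ (hP : IndepParams a lam κ) (hK : κ ≤ K) :
    a (2 ^ (K + 1)) = 3 * a (2 ^ K) := by
  have hpos : 0 < 2 ^ K := Nat.two_pow_pos K
  have hlast : a (2 ^ (K + 1) - 1) = a (2 ^ K) + a (2 ^ K - 1) := by
    rw [show 2 ^ (K + 1) - 1 = 2 ^ K + (2 ^ K - 1) by rw [pow_succ]; omega]
    exact hP.apply_two_pow_add hK (by omega)
  linear_combination (hP (K + 1) (by omega)).2 + 2 * hlast - (hP K hK).2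

theorem apply_two_pow_add_mul (hP : IndepParams a lam κ) (hK : κ ≤ K) (t : ℕ) :
    a (2 ^ (K + t)) = 3 ^ t * a (2 ^ K) := by
  induction t with
  | zero => simp
  | succ t ih =>
    rw [← add_assoc, hP.apply_two_pow_succ (by omega), ih]
    ring

theorem exists_eq_add_of_mem_range (hmono : StrictMono a) (hP : IndepParams a lam κ)
    (hK : κ ≤ K) {x : ℤ} (hx : x ∈ Set.range a) (hlo : a (2 ^ K) ≤ x)
    (hhi : x < 3 * a (2 ^ K)) : ∃ i < 2 ^ K, x = a (2 ^ K) + a i := by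
  obtain ⟨n, rfl⟩ := hx
  rw [← hP.apply_two_pow_succ hK] at hhi
  have hlo' := hmono.le_iff_le.1 hlo
  have hhi' := hmono.lt_iff_lt.1 hhi
  refine ⟨n - 2 ^ K, by rw [pow_succ] at hhi'; omega, ?_⟩
  rw [← hP.apply_two_pow_add hK (by rw [pow_succ] at hhi'; omega)]
  congr 1
  omega

theorem covers_or_covers_of_covers_succ (hmono : StrictMono a) (hnonneg : ∀ n, 0 ≤ a n)
    (hP : IndepParams a lam κ) (hK : κ ≤ K) {r : ℤ} (hr0 : 0 ≤ r) (hr : r < a (2 ^ K))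
    (hcov : Covers (Set.range a) (a (2 ^ (K + 1)) + r)) :
    Covers (Set.range a) r ∨ Covers (a '' Set.Iio (2 ^ K)) (a (2 ^ K) + r) := by
  set ρ := a (2 ^ K)
  have hblock : ∀ x ∈ Set.range a, ρ ≤ x → x < 3 * ρ → ∃ i < 2 ^ K, x = ρ + a i ∧ a i < ρ :=
    fun x hx hlo hhi => (hP.exists_eq_add_of_mem_range hmono hK hx hlo hhi).imp
      fun i ⟨hi, hxi⟩ => ⟨hi, hxi, hmono hi⟩
  have hblock_succ : ∀ x ∈ Set.range a, 3 * ρ ≤ x → x < 9 * ρ → ∃ i, x = 3 * ρ + a i := by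
    intro x hx hlo hhi
    have h3 := hP.apply_two_pow_succ hK
    obtain ⟨i, -, hxi⟩ := hP.exists_eq_add_of_mem_range hmono (K := K + 1) (by omega) hx
      (by omega) (by omega)
    exact ⟨i, by omega⟩
  rw [hP.apply_two_pow_succ hK] at hcov
  obtain ⟨y, z, hy, hz, hyz, hzX, hAP⟩ := hcov
  by_cases hz3 : 3 * ρ ≤ z
  · obtain ⟨j, rfl⟩ := hblock_succ z hz (by omega) (by omega)
    by_cases hy3 : 3 * ρ ≤ y
    · obtain ⟨i, rfl⟩ := hblock_succ y hy hy3 (by omega)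
      exact Or.inl ⟨a i, a j, ⟨i, rfl⟩, ⟨j, rfl⟩, by omega, by omega, by omega⟩
    · obtain ⟨i, -, rfl, hi⟩ := hblock y hy (by omega) (by omega)
      omega
  · have hy0 : 0 ≤ y := by obtain ⟨n, rfl⟩ := hy; exact hnonneg n
    obtain ⟨j, hj, rfl, hjρ⟩ := hblock z hz (by omega) (by omega)
    by_cases hyρ : ρ ≤ y
    · obtain ⟨i, -, rfl, -⟩ := hblock y hy hyρ (by omega)
      have := hnonneg i
      omega
    · exact Or.inr ⟨y, a j, hmono.mem_image_Iio hy (by omega), ⟨j, hj, rfl⟩,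
        by omega, by omega, by omega⟩

theorem covers_or_covers_of_covers_pow (hmono : StrictMono a) (hnonneg : ∀ n, 0 ≤ a n)
    (hP : IndepParams a lam κ) (hk : κ ≤ k) {r : ℤ} (hr0 : 0 ≤ r) (hr : r < a (2 ^ k)) (t : ℕ)
    (hcov : Covers (Set.range a) (a (2 ^ (k + t + 1)) + r)) :
    Covers (Set.range a) r ∨ Covers (a '' Set.Iio (2 ^ k)) (a (2 ^ k) + r) := by
  induction t with
  | zero => exact hP.covers_or_covers_of_covers_succ hmono hnonneg hk hr0 hr hcov
  | succ t ih =>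
    have hrt : r < a (2 ^ (k + t + 1)) :=
      hr.trans_le (hmono.monotone (Nat.pow_le_pow_right two_pos (by omega)))
    refine (hP.covers_or_covers_of_covers_succ hmono hnonneg (by omega) hr0 hrt hcov).elim
      Or.inl fun h => ih (h.mono ?_)
    rintro _ ⟨i, -, rfl⟩ -
    exact ⟨i, rfl⟩

end IndepParams

theorem IsStanleySeq.covers_or_covers_add {A : Finset ℤ} {a : ℕ → ℤ} {lam : ℤ} {κ k : ℕ}
    (ha : IsStanleySeq A a) (hP : IndepParams a lam κ) (hk : κ ≤ k) {r : ℤ} (hr0 : 0 ≤ r)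
    (hr : r < a (2 ^ k)) (hrA : r ∉ a '' Set.Iio (2 ^ k)) :
    Covers (a '' Set.Iio (2 ^ k)) r ∨ Covers (a '' Set.Iio (2 ^ k)) (a (2 ^ k) + r) := by
  have hr' : r ∉ Set.range a := fun h => hrA (ha.strictMono.mem_image_Iio h hr)
  have hρ : a (2 ^ k) ≤ a (2 ^ (k + A.card + 1)) :=
    ha.strictMono.monotone (Nat.pow_le_pow_right two_pos (by omega))
  have hX : a (2 ^ (k + A.card + 1)) + r ∉ Set.range a := by
    intro hX
    obtain ⟨i, -, hXi⟩ := hP.exists_eq_add_of_mem_range ha.strictMono (K := k + A.card + 1)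
      (by omega) hX (by omega) (by omega)
    exact hr' ⟨i, by omega⟩
  have hXA : a (A.card - 1) < a (2 ^ (k + A.card + 1)) + r := by
    have := ha.strictMono (show A.card - 1 < 2 ^ (k + A.card + 1) from
      (Nat.sub_le _ 1).trans_lt (Nat.lt_two_pow_self.trans_le
        (Nat.pow_le_pow_right two_pos (by omega))))
    omega
  refine (hP.covers_or_covers_of_covers_pow ha.strictMono ha.nonneg hk hr0 hr A.card
    (ha.covers hX hXA)).imp_left fun h => h.mono fun y hy hyr => ?_
  exact ha.strictMono.mem_image_Iio hy (hyr.trans hr)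

section TensorSet

theorem mul_add_lt_mul_add_of_lt {ρ q q' p p' : ℤ} (hp : p ∈ Set.Ico 0 ρ)
    (hp' : p' ∈ Set.Ico 0 ρ) (hq : q < q') : ρ * q + p < ρ * q' + p' := by
  obtain ⟨hp0, hpρ⟩ := hp
  obtain ⟨hp'0, -⟩ := hp'
  nlinarith

theorem le_of_mul_add_lt_mul_add {ρ q q' p p' : ℤ} (hp : p ∈ Set.Ico 0 ρ)
    (hp' : p' ∈ Set.Ico 0 ρ) (h : ρ * q + p < ρ * q' + p') : q ≤ q' := by
  by_contra! hq
  exact (mul_add_lt_mul_add_of_lt hp' hp hq).not_gt h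

/-- For `ρ = a (2 ^ k)`, `Q = B` and `P = A*` this is the paper's `A ⊗ₖ B`. -/
def tensorSet (ρ : ℤ) (Q P : Set ℤ) : Set ℤ := Set.image2 (fun q p => ρ * q + p) Q P

variable {P Q : Set ℤ} {ρ : ℤ}

theorem mul_add_mem_tensorSet {q p : ℤ} (hq : q ∈ Q) (hp : p ∈ P) :
    ρ * q + p ∈ tensorSet ρ Q P :=
  Set.mem_image2_of_mem hq hp

theorem ThreeFreeSet.tensorSet (hP : P ⊆ Set.Ico 0 ρ) (hPP : ThreeFreeSet (P ∪ shift P ρ))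
    (hQ : ThreeFreeSet Q) : ThreeFreeSet (tensorSet ρ Q P) := by
  rintro _ ⟨q₁, hq₁, p₁, hp₁, rfl⟩ _ ⟨q₂, hq₂, p₂, hp₂, rfl⟩ _ ⟨q₃, hq₃, p₃, hp₃, rfl⟩ h₁₂ h₂₃ hAP
  have hq₁₂ := le_of_mul_add_lt_mul_add (hP hp₁) (hP hp₂) h₁₂
  have hq₂₃ := le_of_mul_add_lt_mul_add (hP hp₂) (hP hp₃) h₂₃
  obtain ⟨hp₁0, hp₁ρ⟩ := hP hp₁
  obtain ⟨hp₂0, hp₂ρ⟩ := hP hp₂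
  obtain ⟨hp₃0, hp₃ρ⟩ := hP hp₃
  have hshift : ∀ p ∈ P, ρ + p ∈ P ∪ shift P ρ := fun p hp => Or.inr ⟨p, hp, add_comm p ρ⟩
  -- the carry `D` of the second differences of the digits is `-1`, `0` or `1`
  set D := q₁ + q₃ - 2 * q₂ with hD
  have hcarry : ρ * D = 2 * p₂ - p₁ - p₃ := by linear_combination hAP
  have hD_lt : D < 2 := by nlinarith
  have hD_gt : -2 < D := by nlinarith
  obtain hD' | hD' | hD' : D = -1 ∨ D = 0 ∨ D = 1 := by omega
  · rw [hD'] at hcarry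
    exact hPP p₁ (Or.inl hp₁) _ (hshift p₂ hp₂) _ (hshift p₃ hp₃) (by linarith) (by linarith)
      (by linarith)
  · rw [hD', mul_zero] at hcarry
    rcases hq₁₂.lt_or_eq with hlt | rfl
    · exact hQ q₁ hq₁ q₂ hq₂ q₃ hq₃ hlt (by omega) (by omega)
    · obtain rfl : q₁ = q₃ := by omega
      exact hPP p₁ (Or.inl hp₁) p₂ (Or.inl hp₂) p₃ (Or.inl hp₃) (by linarith) (by linarith)
        (by linarith)
  · rw [hD'] at hcarry
    exact hPP p₁ (Or.inl hp₁) p₂ (Or.inl hp₂) _ (hshift p₃ hp₃) (by linarith) (by linarith)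
      (by linarith)

theorem Covers.tensorSet_of_mem {s r : ℤ} (hP : P ⊆ Set.Ico 0 ρ) (hs : Covers Q s)
    (hr : r ∈ P) : Covers (tensorSet ρ Q P) (ρ * s + r) := by
  obtain ⟨u, v, hu, hv, huv, hvs, hAP⟩ := hs
  have hρ : 0 < ρ := (hP hr).1.trans_lt (hP hr).2
  exact ⟨_, _, mul_add_mem_tensorSet hu hr, mul_add_mem_tensorSet hv hr,
    by nlinarith, by nlinarith, by linear_combination ρ * hAP⟩

theorem Covers.tensorSet {s r : ℤ} (hP : P ⊆ Set.Ico 0 ρ) (hs : s ∈ Q ∨ Covers Q s)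
    (hr : Covers P r) : Covers (tensorSet ρ Q P) (ρ * s + r) := by
  obtain ⟨y, z, hy, hz, hyz, hzr, hAP⟩ := hr
  obtain ⟨hy0, -⟩ := hP hy
  obtain ⟨-, hzρ⟩ := hP hz
  rcases hs with hs | ⟨u, v, hu, hv, huv, hvs, hAP'⟩
  · exact ⟨_, _, mul_add_mem_tensorSet hs hy, mul_add_mem_tensorSet hs hz,
      by linarith, by linarith, by linear_combination hAP⟩
  · exact ⟨_, _, mul_add_mem_tensorSet hu hy, mul_add_mem_tensorSet hv hz,
      mul_add_lt_mul_add_of_lt (hP hy) (hP hz) huv, by nlinarith,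
      by linear_combination ρ * hAP' + hAP⟩

theorem covers_tensorSet {K M m : ℤ} (hP : P ⊆ Set.Ico 0 ρ) (hK : IsGreatest P K)
    (hPcov : ∀ r ∈ Set.Ico 0 ρ, r ∉ P → Covers P r ∨ Covers P (ρ + r))
    (hM : M ∈ Q) (hQcov : ∀ s, M < s → s ∉ Q → Covers Q s)
    (hm : ρ * M + K < m) (hmQP : m ∉ tensorSet ρ Q P) : Covers (tensorSet ρ Q P) m := by
  have hKρ := hP hK.1
  have hρ : 0 < ρ := hKρ.1.trans_lt hKρ.2
  have hQ : ∀ s, M ≤ s → s ∈ Q ∨ Covers Q s := fun s hs =>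
    or_iff_not_imp_left.2 fun hsQ => hQcov s (hs.lt_of_ne (by rintro rfl; exact hsQ hM)) hsQ
  obtain ⟨s, r, hr, rfl⟩ : ∃ s r, r ∈ Set.Ico 0 ρ ∧ m = ρ * s + r :=
    ⟨m / ρ, m % ρ, ⟨Int.emod_nonneg _ hρ.ne', Int.emod_lt_of_pos _ hρ⟩,
      (Int.mul_ediv_add_emod m ρ).symm⟩
  have hMs : M ≤ s := le_of_mul_add_lt_mul_add hKρ hr hm
  by_cases hrP : r ∈ P
  · exact ((hQ s hMs).resolve_left fun hs => hmQP (mul_add_mem_tensorSet hs hrP)).tensorSet_of_mem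
      hP hrP
  rcases hPcov r hr hrP with hcov | hcov
  · exact hcov.tensorSet hP (hQ s hMs)
  -- a cover of `ρ + r` borrows one from the digit `s`
  have hrK : r < K := by
    obtain ⟨y, z, hy, hz, -, -, hAP⟩ := hcov
    linarith [(hP hy).1, hK.2 hz, hKρ.2]
  have hMs' : M ≤ s - 1 := by
    rcases hMs.lt_or_eq with h | rfl
    · omega
    · linarith
  have := hcov.tensorSet hP (hQ (s - 1) hMs')
  rwa [show ρ * (s - 1) + (ρ + r) = ρ * s + r by ring] at this

end TensorSet

def tensorSeq (a b : ℕ → ℤ) (k n : ℕ) : ℤ := a (2 ^ k) * b (n / 2 ^ k) + a (n % 2 ^ k)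

section TensorSeq

variable {a b : ℕ → ℤ} {k : ℕ}

theorem tensorSeq_apply (a b : ℕ → ℤ) (k : ℕ) (q : ℕ) {i : ℕ} (hi : i < 2 ^ k) :
    tensorSeq a b k (2 ^ k * q + i) = a (2 ^ k) * b q + a i := by
  rw [tensorSeq, Nat.mul_add_div (Nat.two_pow_pos k), Nat.mul_add_mod, Nat.div_eq_of_lt hi,
    Nat.mod_eq_of_lt hi, add_zero]

theorem tensorSeq_two_pow_mul_sub_one (a b : ℕ → ℤ) (k : ℕ) {N : ℕ} (hN : 0 < N) :
    tensorSeq a b k (2 ^ k * N - 1) = a (2 ^ k) * b (N - 1) + a (2 ^ k - 1) := by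
  have hpos := Nat.two_pow_pos k
  rw [← tensorSeq_apply a b k (N - 1) (by omega : 2 ^ k - 1 < 2 ^ k)]
  congr 1
  obtain ⟨N, rfl⟩ := Nat.exists_eq_succ_of_ne_zero hN.ne'
  rw [Nat.succ_sub_one, Nat.mul_succ]
  omega

theorem tensorSeq_two_pow_add (ha : a 0 = 0) (t : ℕ) :
    tensorSeq a b k (2 ^ (k + t)) = a (2 ^ k) * b (2 ^ t) := by
  rw [pow_add, ← add_zero (2 ^ k * 2 ^ t), tensorSeq_apply a b k _ (Nat.two_pow_pos k), ha,
    add_zero]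

theorem tensorSeq_strictMono (ha : StrictMono a) (ha_nonneg : ∀ n, 0 ≤ a n)
    (hb : StrictMono b) (k : ℕ) : StrictMono (tensorSeq a b k) := by
  intro m n hmn
  have hpos := Nat.two_pow_pos k
  have hdigit : ∀ n, a (n % 2 ^ k) ∈ Set.Ico 0 (a (2 ^ k)) := fun n =>
    ha.image_Iio_subset_Ico ha_nonneg _ ⟨_, Nat.mod_lt n hpos, rfl⟩
  rcases (Nat.div_le_div_right (c := 2 ^ k) hmn.le).lt_or_eq with hlt | heq
  · exact mul_add_lt_mul_add_of_lt (hdigit m) (hdigit n) (hb hlt)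
  · have hmod : m % 2 ^ k < n % 2 ^ k := by
      have := Nat.div_add_mod m (2 ^ k)
      have := Nat.div_add_mod n (2 ^ k)
      rw [heq] at *
      omega
    rw [tensorSeq, tensorSeq, heq]
    exact (add_lt_add_iff_left _).2 (ha hmod)

theorem range_tensorSeq (a b : ℕ → ℤ) (k : ℕ) :
    Set.range (tensorSeq a b k) = tensorSet (a (2 ^ k)) (Set.range b) (a '' Set.Iio (2 ^ k)) := by
  apply subset_antisymm
  · rintro _ ⟨n, rfl⟩
    exact mul_add_mem_tensorSet ⟨_, rfl⟩ ⟨_, Nat.mod_lt n (Nat.two_pow_pos k), rfl⟩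
  · rintro _ ⟨_, ⟨q, rfl⟩, _, ⟨i, hi, rfl⟩, rfl⟩
    exact ⟨_, tensorSeq_apply a b k q hi⟩

theorem image_range_tensorSeq (a b : ℕ → ℤ) (k N : ℕ) :
    (Finset.range (2 ^ k * N)).image (tensorSeq a b k) =
      (Finset.range (2 ^ k) ×ˢ (Finset.range N).image b).image
        fun p => a (2 ^ k) * p.2 + a p.1 := by
  have hpos := Nat.two_pow_pos k
  ext x
  simp only [Finset.mem_image, Finset.mem_range, Finset.mem_product, Prod.exists]
  constructor
  · rintro ⟨n, hn, rfl⟩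
    exact ⟨n % 2 ^ k, _, ⟨Nat.mod_lt n hpos, n / 2 ^ k,
      Nat.div_lt_of_lt_mul hn, rfl⟩, rfl⟩
  · rintro ⟨i, _, ⟨hi, q, hq, rfl⟩, rfl⟩
    refine ⟨2 ^ k * q + i, ?_, tensorSeq_apply a b k q hi⟩
    calc 2 ^ k * q + i < 2 ^ k * (q + 1) := by rw [mul_add_one]; omega
      _ ≤ 2 ^ k * N := Nat.mul_le_mul_left _ hq

theorem indepParams_tensorSeq {lamA lamB : ℤ} {κA κB : ℕ} (hA : IndepParams a lamA κA)
    (hk : κA ≤ k) (hB : IndepParams b lamB κB) (ha0 : a 0 = 0) :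
    IndepParams (tensorSeq a b k) (a (2 ^ k) * lamB + lamA) (k + κB) := by
  intro K hK
  obtain ⟨t, rfl⟩ := Nat.exists_eq_add_of_le hK
  have hpos := Nat.two_pow_pos k
  have htpos := Nat.two_pow_pos (κB + t)
  rw [add_assoc, tensorSeq_two_pow_add ha0]
  refine ⟨fun i hi => ?_, ?_⟩
  · have hq : i / 2 ^ k < 2 ^ (κB + t) :=
      Nat.div_lt_of_lt_mul (by rwa [← pow_add])
    have hsplit : 2 ^ (k + (κB + t)) + i = 2 ^ k * (2 ^ (κB + t) + i / 2 ^ k) + i % 2 ^ k := by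
      rw [pow_add, mul_add, add_assoc, Nat.div_add_mod]
    rw [hsplit, tensorSeq_apply a b k _ (Nat.mod_lt i hpos),
      hB.apply_two_pow_add (by omega) hq, tensorSeq]
    ring
  · have hsplit : 2 ^ (k + (κB + t)) - 1 = 2 ^ k * (2 ^ (κB + t) - 1) + (2 ^ k - 1) := by
      rw [pow_add, Nat.mul_sub_one]
      have := Nat.le_mul_of_pos_right (2 ^ k) htpos
      omega
    rw [hsplit, tensorSeq_apply a b k _ (by omega : 2 ^ k - 1 < 2 ^ k)]
    linear_combination a (2 ^ k) * (hB (κB + t) (by omega)).2 + (hA k hk).2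

end TensorSeq

theorem IsStanleySeq.eq_tensorSeq {A B : Finset ℤ} {a b ab : ℕ → ℤ} {lam : ℤ} {κ k : ℕ}
    (hA : IsStanleySeq A a) (hB : IsStanleySeq B b) (hP : IndepParams a lam κ) (hk : κ ≤ k)
    (hab : IsStanleySeq ((Finset.range (2 ^ k) ×ˢ B).image
      fun p => a (2 ^ k) * p.2 + a p.1) ab) :
    ab = tensorSeq a b k := by
  have hpos := Nat.two_pow_pos k
  set P := a '' Set.Iio (2 ^ k)
  have hPρ : P ⊆ Set.Ico 0 (a (2 ^ k)) := hA.strictMono.image_Iio_subset_Ico hA.nonneg _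
  have hPfree : ThreeFreeSet (P ∪ shift P (a (2 ^ k))) :=
    hA.threeFree_range.mono <| Set.union_subset (Set.image_subset_range _ _) <| by
      rintro _ ⟨_, ⟨i, hi, rfl⟩, rfl⟩
      exact ⟨2 ^ k + i, by rw [hP.apply_two_pow_add hk hi, add_comm]⟩
  have hPmax : IsGreatest P (a (2 ^ k - 1)) := by
    refine ⟨⟨_, Set.mem_Iio.2 (by omega), rfl⟩, ?_⟩
    rintro _ ⟨i, hi, rfl⟩
    exact hA.strictMono.monotone (by rw [Set.mem_Iio] at hi; omega)
  refine hab.eq_of_greedy (N := 2 ^ k * B.card)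
    (tensorSeq_strictMono hA.strictMono hA.nonneg hB.strictMono k)
    (by rw [image_range_tensorSeq, hB.image_range_card]) ?_ ?_
  · rw [range_tensorSeq]
    exact ThreeFreeSet.tensorSet hPρ hPfree hB.threeFree_range
  · intro x hx hxr
    rw [tensorSeq_two_pow_mul_sub_one a b k hB.card_pos] at hx
    rw [range_tensorSeq] at hxr ⊢
    exact covers_tensorSet hPρ hPmax
      (fun r hr hrP => hA.covers_or_covers_add hP hk hr.1 hr.2 hrP) ⟨_, rfl⟩
      (fun s hs hsb => hB.covers hsb hs) hx hxr

theorem Independent.exists_indepParams_kappa {a : ℕ → ℤ} (ha : Independent a) :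
    ∃ lam, IndepParams a lam (kappa a) := by
  obtain ⟨lam, κ, hP⟩ := ha
  exact Nat.sInf_mem (s := {κ | ∃ lam, IndepParams a lam κ}) ⟨κ, lam, hP⟩

theorem IndepParams.scalingFactor_eq {a : ℕ → ℤ} {lam : ℤ} {κ K : ℕ} (hP : IndepParams a lam κ)
    (hK : κ ≤ K) : scalingFactor a = a (2 ^ K) / 3 ^ K := by
  obtain ⟨lam', hP'⟩ := Independent.exists_indepParams_kappa ⟨lam, κ, hP⟩
  have hκ : kappa a ≤ κ := Nat.sInf_le ⟨lam, hP⟩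
  obtain ⟨t, rfl⟩ := Nat.exists_eq_add_of_le (hκ.trans hK)
  rw [scalingFactor, hP'.apply_two_pow_add_mul le_rfl t]
  push_cast
  rw [pow_add]
  field_simp

/-- the scaling factor of the independent Stanley sequence
S(A ⊗_k B) is the product α(A)·α(B). -/
theorem product_scaling_factor (A B : Finset ℤ) (a b : ℕ → ℤ)
    (hA : IsStanleySeq A a) (hB : IsStanleySeq B b)
    (hIndA : Independent a) (hIndB : Independent b)
    (k : ℕ) (hk : kappa a ≤ k)
    (AB : Finset ℤ)
    (hAB : AB = (Finset.range (2 ^ k) ×ˢ B).image fun p => a (2 ^ k) * p.2 + a p.1) :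
    ∀ ab : ℕ → ℤ, IsStanleySeq AB ab →
      Independent ab ∧ scalingFactor ab = scalingFactor a * scalingFactor b := by
  intro ab hab
  subst hAB
  obtain ⟨lamA, hPA⟩ := hIndA.exists_indepParams_kappa
  obtain ⟨lamB, κB, hPB⟩ := hIndB
  obtain rfl := hA.eq_tensorSeq hB hPA hk hab
  have hPC := indepParams_tensorSeq hPA hk hPB hA.apply_zero
  refine ⟨⟨_, _, hPC⟩, ?_⟩
  rw [hPC.scalingFactor_eq le_rfl, hPA.scalingFactor_eq hk, hPB.scalingFactor_eq le_rfl,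
    tensorSeq_two_pow_add hA.apply_zero]
  push_cast
  ring
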